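/- arXiv:1202.2961 — 2 statements merged into one kernel-verified Lean document; each statement's English description precedes it below -/
import Mathlib

section
/- Let V be a finite-dimensional complex vector space and A a traceless endomorphism of V. If det(A + C) = 0 for every traceless endomorphism C of V with det(C) = 0, then A = 0. -/
open Matrix

lemma trace_fromBlocks' {κ μ : Type*} [Fintype κ] [Fintype μ] [DecidableEq κ] [DecidableEq μ]
    (A : Matrix κ κ ℂ) (B : Matrix κ μ ℂ) (C : Matrix μ κ ℂ) (D : Matrix μ μ ℂ) :
    (Matrix.fromBlocks A B C D).trace = A.trace + D.trace := by
  simp [Matrix.trace, Matrix.diag, Fintype.sum_sum_type]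

lemma offdiag_case {κ : Type*} [Fintype κ] [DecidableEq κ]
    (M : Matrix (κ ⊕ Fin 2) (κ ⊕ Fin 2) ℂ) (hM : M.trace = 0)
    (hij : M (Sum.inr 0) (Sum.inr 1) ≠ 0) :
    ∃ C : Matrix (κ ⊕ Fin 2) (κ ⊕ Fin 2) ℂ,
      C.trace = 0 ∧ C.det = 0 ∧ (M + C).det ≠ 0 := by
  set v : κ ⊕ Fin 2 → ℂ := fun k => M k (Sum.inr 1) with hv
  set u : ℂ := -(Fintype.card κ : ℂ) - v (Sum.inr 1) with hu
  set t : ℂ := (u * v (Sum.inr 1) - 1) / v (Sum.inr 0) with ht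
  set P : Matrix (κ ⊕ Fin 2) (κ ⊕ Fin 2) ℂ :=
    Matrix.fromBlocks 1 (Matrix.of fun k b => if b = 1 then v (Sum.inl k) else 0) 0
      !![u, v (Sum.inr 0); t, v (Sum.inr 1)] with hP
  have hvi : v (Sum.inr 0) ≠ 0 := hij
  have hdetP : P.det = 1 := by
    rw [hP, Matrix.det_fromBlocks_zero₂₁, Matrix.det_one, one_mul, Matrix.det_fin_two_of, ht]
    field_simp
    ring
  have hcol : ∀ k, P k (Sum.inr 1) = v k := by
    rintro (k | b)
    · simp [hP]
    · fin_cases b <;> simp [hP]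
  refine ⟨P - M, ?_, ?_, ?_⟩
  · rw [Matrix.trace_sub, hM, sub_zero, hP, trace_fromBlocks', Matrix.trace_one,
      Matrix.trace_fin_two_of, hu]
    ring
  · apply Matrix.det_eq_zero_of_column_eq_zero (Sum.inr 1)
    intro k
    simp [Matrix.sub_apply, hcol k, hv]
  · have : M + (P - M) = P := add_sub_cancel _ _
    rw [this, hdetP]
    exact one_ne_zero

lemma diag_case {κ : Type*} [Fintype κ] [DecidableEq κ] [Nonempty κ]
    (M : Matrix (κ ⊕ Fin 1) (κ ⊕ Fin 1) ℂ) (hM : M.trace = 0)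
    (hij : M (Sum.inr 0) (Sum.inr 0) ≠ 0) :
    ∃ C : Matrix (κ ⊕ Fin 1) (κ ⊕ Fin 1) ℂ,
      C.trace = 0 ∧ C.det = 0 ∧ (M + C).det ≠ 0 := by
  set v : κ ⊕ Fin 1 → ℂ := fun k => M k (Sum.inr 0) with hv
  have hcard : (Fintype.card κ : ℂ) ≠ 0 :=
    Nat.cast_ne_zero.mpr Fintype.card_ne_zero
  set d : ℂ := -v (Sum.inr 0) / (Fintype.card κ : ℂ) with hd
  set P : Matrix (κ ⊕ Fin 1) (κ ⊕ Fin 1) ℂ :=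
    Matrix.fromBlocks (d • 1) (Matrix.of fun k _ => v (Sum.inl k)) 0 !![v (Sum.inr 0)] with hP
  have hd0 : d ≠ 0 := by
    rw [hd]
    exact div_ne_zero (neg_ne_zero.mpr hij) hcard
  have hdetP : P.det ≠ 0 := by
    rw [hP, Matrix.det_fromBlocks_zero₂₁, Matrix.det_smul, Matrix.det_one, mul_one,
      Matrix.det_fin_one_of]
    exact mul_ne_zero (pow_ne_zero _ hd0) hij
  have hcol : ∀ k, P k (Sum.inr 0) = v k := by
    rintro (k | b)
    · simp [hP]
    · fin_cases b; simp [hP]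
  refine ⟨P - M, ?_, ?_, ?_⟩
  · rw [Matrix.trace_sub, hM, sub_zero, hP, trace_fromBlocks', Matrix.trace_smul,
      Matrix.trace_one, Matrix.trace_fin_one_of, hd]
    field_simp
    rw [smul_eq_mul, neg_mul, div_mul_cancel₀ _ hcard, neg_add_cancel]
  · apply Matrix.det_eq_zero_of_column_eq_zero (Sum.inr 0)
    intro k
    simp [Matrix.sub_apply, hcol k, hv]
  · have : M + (P - M) = P := add_sub_cancel _ _
    rw [this]
    exact hdetP

lemma trace_submatrix_equiv' {ι κ : Type*} [Fintype ι] [Fintype κ]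
    (e : ι ≃ κ) (M : Matrix κ κ ℂ) : (M.submatrix e e).trace = M.trace := by
  simp only [Matrix.trace, Matrix.diag, Matrix.submatrix_apply]
  exact e.sum_comp (fun j => M j j)

lemma transfer {ι : Type*} [Fintype ι] [DecidableEq ι] {n : ℕ} (e : ι ≃ Fin n)
    (M : Matrix (Fin n) (Fin n) ℂ)
    (h : ∀ C : Matrix (Fin n) (Fin n) ℂ, C.trace = 0 → C.det = 0 → (M + C).det = 0)
    (C' : Matrix ι ι ℂ) (h1 : C'.trace = 0) (h2 : C'.det = 0) :
    ((M.submatrix e e) + C').det = 0 := by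
  have key := h (C'.submatrix e.symm e.symm)
    (by rw [trace_submatrix_equiv']; exact h1)
    (by rw [Matrix.det_submatrix_equiv_self]; exact h2)
  have : M.submatrix e e + C' = (M + C'.submatrix e.symm e.symm).submatrix e e := by
    rw [Matrix.submatrix_add]
    congr 1
    rw [Matrix.submatrix_submatrix]
    simp
  rw [this, Matrix.det_submatrix_equiv_self]
  exact key

lemma matrix_version {n : ℕ} (M : Matrix (Fin n) (Fin n) ℂ) (hM : M.trace = 0)
    (h : ∀ C : Matrix (Fin n) (Fin n) ℂ, C.trace = 0 → C.det = 0 → (M + C).det = 0) :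
    M = 0 := by
  by_contra h0
  obtain ⟨i, j, hij⟩ : ∃ i j, M i j ≠ 0 := by
    by_contra hc
    push_neg at hc
    exact h0 (by ext i j; simpa using hc i j)
  rcases eq_or_ne i j with rij | rij
  · subst rij
    rcases Nat.lt_or_ge n 2 with hn | hn
    · haveI : Subsingleton (Fin n) := by
        have h1 : n = 1 := le_antisymm (by omega) i.pos
        subst h1; infer_instance
      have htr : M.trace = M i i := by
        rw [Matrix.trace]
        exact Finset.sum_eq_single_of_mem i (Finset.mem_univ i)
          (fun b _ hb => absurd (Subsingleton.elim b i) hb)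
      rw [hM] at htr
      exact hij htr.symm
    · haveI : Nonempty (Fin (n - 1)) := ⟨⟨0, by omega⟩⟩
      let e₀ : (Fin (n - 1) ⊕ Fin 1) ≃ Fin n :=
        finSumFinEquiv.trans (finCongr (by omega))
      let e : (Fin (n - 1) ⊕ Fin 1) ≃ Fin n :=
        e₀.trans (Equiv.swap (e₀ (Sum.inr 0)) i)
      have he : e (Sum.inr 0) = i := by
        simp [e, Equiv.swap_apply_left]
      obtain ⟨C', h1, h2, h3⟩ := diag_case (M.submatrix e e)
        (by rw [trace_submatrix_equiv']; exact hM)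
        (by rw [Matrix.submatrix_apply, he]; exact hij)
      exact h3 (transfer e M h C' h1 h2)
  · have hn : 2 ≤ n := by
      rcases Nat.lt_or_ge n 2 with hn | hn
      · haveI : Subsingleton (Fin n) := by
          have h1 : n = 1 := le_antisymm (by omega) i.pos
          subst h1; infer_instance
        exact absurd (Subsingleton.elim i j) rij
      · exact hn
    let e₀ : (Fin (n - 2) ⊕ Fin 2) ≃ Fin n :=
      finSumFinEquiv.trans (finCongr (by omega))
    set a := e₀ (Sum.inr 0) with ha
    set b := e₀ (Sum.inr 1) with hb
    have hab : a ≠ b := by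
      rw [ha, hb]
      intro hcontra
      have h01 : (Sum.inr 0 : Fin (n-2) ⊕ Fin 2) = Sum.inr 1 := e₀.injective hcontra
      simp at h01
    set τ : Equiv.Perm (Fin n) := Equiv.swap a i with hτ
    have hτb : τ b ≠ i := by
      intro hcontra
      have : b = τ i := by
        have := congrArg τ hcontra
        rwa [Equiv.swap_apply_self] at this
      rw [hτ, Equiv.swap_apply_right] at this
      exact hab this.symm
    set τ' : Equiv.Perm (Fin n) := Equiv.swap (τ b) j with hτ'
    let e : (Fin (n - 2) ⊕ Fin 2) ≃ Fin n := (e₀.trans τ).trans τ'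
    have he0 : e (Sum.inr 0) = i := by
      show τ' (τ a) = i
      rw [hτ, Equiv.swap_apply_left, hτ']
      exact Equiv.swap_apply_of_ne_of_ne hτb.symm rij
    have he1 : e (Sum.inr 1) = j := by
      show τ' (τ b) = j
      rw [hτ', Equiv.swap_apply_left]
    obtain ⟨C', h1, h2, h3⟩ := offdiag_case (M.submatrix e e)
      (by rw [trace_submatrix_equiv']; exact hM)
      (by rw [Matrix.submatrix_apply, he0, he1]; exact hij)
    exact h3 (transfer e M h C' h1 h2)




/-- If `A` is a traceless endomorphism of a finite-dimensional complex vector space `V`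
(of dimension at least 1) such that `det (A + C) = 0` for every traceless endomorphism
`C` with `det C = 0`, then `A = 0`. -/
theorem stmt_0 {V : Type*} [AddCommGroup V] [Module ℂ V] [FiniteDimensional ℂ V]
    (hdim : 1 ≤ Module.finrank ℂ V)
    (A : V →ₗ[ℂ] V) (hA : LinearMap.trace ℂ V A = 0)
    (h : ∀ C : V →ₗ[ℂ] V, LinearMap.trace ℂ V C = 0 → LinearMap.det C = 0 →
      LinearMap.det (A + C) = 0) :
    A = 0 := by
  let b := Module.finBasis ℂ V
  set M := LinearMap.toMatrix b b A with hMdef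
  have hMzero : M = 0 := by
    apply matrix_version
    · rw [hMdef, ← LinearMap.trace_eq_matrix_trace ℂ b A]
      exact hA
    · intro C' h1 h2
      have h3 := h (Matrix.toLin b b C')
        (by rw [LinearMap.trace_eq_matrix_trace ℂ b, LinearMap.toMatrix_toLin]; exact h1)
        (by rw [LinearMap.det_toLin]; exact h2)
      rw [← LinearMap.det_toMatrix b] at h3
      rw [map_add, LinearMap.toMatrix_toLin] at h3
      exact h3
  have := congrArg (Matrix.toLin b b) hMzero
  rwa [hMdef, Matrix.toLin_toMatrix, map_zero] at this
end

section
/- Let n ≥ 2 and let L be a linear subspace of the n×n complex matrices consisting entirely of nilpotent matrices. Then dim L ≤ n(n-1)/2. -/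
open Module Set

variable {V : Type*} [AddCommGroup V] [Module ℂ V]

def evalL (L : Submodule ℂ (Module.End ℂ V)) (v : V) : ↥L →ₗ[ℂ] V where
  toFun A := A.1 v
  map_add' _ _ := rfl
  map_smul' _ _ := rfl

section helpers
variable {M : Type*} [AddCommGroup M] [Module ℂ M]

/-- restriction to an invariant subspace, as a linear map in the parameter. -/
def restrictMap (W : Submodule ℂ V) (F : M →ₗ[ℂ] Module.End ℂ V)
    (h : ∀ m, ∀ x ∈ W, F m x ∈ W) : M →ₗ[ℂ] Module.End ℂ ↥W where
  toFun m := (F m).restrict (h m)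
  map_add' A B := by
    refine LinearMap.ext fun x => Subtype.ext ?_
    simp [LinearMap.restrict_coe_apply]
  map_smul' c A := by
    refine LinearMap.ext fun x => Subtype.ext ?_
    simp [LinearMap.restrict_coe_apply]

@[simp] lemma restrictMap_coe_apply (W : Submodule ℂ V) (F : M →ₗ[ℂ] Module.End ℂ V)
    (h : ∀ m, ∀ x ∈ W, F m x ∈ W) (m : M) (x : ↥W) :
    ((restrictMap W F h m x : ↥W) : V) = F m x := rfl

/-- induced map on the quotient, as a linear map in the parameter. -/
def quotMap (W : Submodule ℂ V) (F : M →ₗ[ℂ] Module.End ℂ V)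
    (h : ∀ m, ∀ x ∈ W, F m x ∈ W) : M →ₗ[ℂ] Module.End ℂ (V ⧸ W) where
  toFun m := W.mapQ W (F m) (h m)
  map_add' A B := by
    refine LinearMap.ext fun z => ?_
    obtain ⟨x, rfl⟩ := W.mkQ_surjective z
    simp [Submodule.mapQ_apply]
  map_smul' c A := by
    refine LinearMap.ext fun z => ?_
    obtain ⟨x, rfl⟩ := W.mkQ_surjective z
    simp [Submodule.mapQ_apply]

@[simp] lemma quotMap_apply (W : Submodule ℂ V) (F : M →ₗ[ℂ] Module.End ℂ V)
    (h : ∀ m, ∀ x ∈ W, F m x ∈ W) (m : M) (x : V) :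
    quotMap W F h m (Submodule.Quotient.mk x) = Submodule.Quotient.mk (F m x) :=
  Submodule.mapQ_apply (h := h m) _ _ _ x

/-- lifting a family of maps vanishing on `W'` with values in `W`. -/
def liftRestrict (W W' : Submodule ℂ V) (F : M →ₗ[ℂ] Module.End ℂ V)
    (h1 : ∀ m x, F m x ∈ W) (h2 : ∀ m, ∀ x ∈ W', F m x = 0) :
    M →ₗ[ℂ] ((V ⧸ W') →ₗ[ℂ] ↥W) where
  toFun m := Submodule.liftQ W' (LinearMap.codRestrict W (F m) (h1 m))
    (fun x hx => by
      rw [LinearMap.mem_ker]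
      exact Subtype.ext (by simp [LinearMap.codRestrict_apply, h2 m x hx]))
  map_add' A B := by
    refine LinearMap.ext fun z => ?_
    obtain ⟨x, rfl⟩ := W'.mkQ_surjective z
    refine Subtype.ext ?_
    simp [Submodule.liftQ_apply, LinearMap.codRestrict_apply]
  map_smul' c A := by
    refine LinearMap.ext fun z => ?_
    obtain ⟨x, rfl⟩ := W'.mkQ_surjective z
    refine Subtype.ext ?_
    simp [Submodule.liftQ_apply, LinearMap.codRestrict_apply]

@[simp] lemma liftRestrict_apply (W W' : Submodule ℂ V) (F : M →ₗ[ℂ] Module.End ℂ V)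
    (h1 : ∀ m x, F m x ∈ W) (h2 : ∀ m, ∀ x ∈ W', F m x = 0) (m : M) (x : V) :
    ((liftRestrict W W' F h1 h2 m (Submodule.Quotient.mk x) : ↥W) : V) = F m x := by
  simp [liftRestrict, Submodule.liftQ_apply, LinearMap.codRestrict_apply]

end helpers

/-- Generic independence: if `u` is linearly independent, then for some `t ≠ 0`
the perturbed family `u i + t • d i` is still linearly independent. -/
lemma generic_indep [FiniteDimensional ℂ V] {k : ℕ} (u d : Fin k → V)
    (hu : LinearIndependent ℂ u) :
    ∃ t : ℂ, t ≠ 0 ∧ LinearIndependent ℂ (fun i => u i + t • d i) := by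
  classical
  -- construct g : V →ₗ (Fin k → ℂ) with g (u i) = δ_i
  set S := Submodule.span ℂ (Set.range u) with hS
  obtain ⟨S', hS'⟩ := S.exists_isCompl
  let b : Basis (Fin k) ℂ S := Basis.span hu
  let g : V →ₗ[ℂ] (Fin k → ℂ) :=
    (b.equivFun.toLinearMap).comp (S.linearProjOfIsCompl S' hS')
  have hg : ∀ i, g (u i) = Pi.single i 1 := by
    intro i
    have h1 : (S.linearProjOfIsCompl S' hS') (u i) = b i := by
      have : ((b i : S) : V) = u i := congrArg Subtype.val (Basis.span_apply hu i)
      rw [← this]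
      exact Submodule.linearProjOfIsCompl_apply_left hS' (b i)
    funext j
    simp only [g, LinearMap.comp_apply, h1, LinearEquiv.coe_coe]
    rw [Basis.equivFun_self]
    simp [Pi.single_apply, eq_comm]
  -- the endomorphism e
  let D : (Fin k → ℂ) →ₗ[ℂ] V :=
    { toFun := fun c => ∑ i, c i • d i
      map_add' := by intro x y; simp [add_smul, Finset.sum_add_distrib]
      map_smul' := by intro c x; simp [smul_smul, Finset.smul_sum] }
  let e : Module.End ℂ (Fin k → ℂ) := g.comp D
  -- choose t avoiding eigenvalues
  have hfin : (setOf e.HasEigenvalue ∪ {0}).Finite :=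
    (Module.End.finite_hasEigenvalue e).union (finite_singleton 0)
  obtain ⟨μ, hμ⟩ := Set.Infinite.nonempty (hfin.infinite_compl)
  simp only [mem_compl_iff, mem_union, mem_singleton_iff, not_or, mem_setOf_eq] at hμ
  obtain ⟨hμe, hμ0⟩ := hμ
  refine ⟨-μ⁻¹, by simp [inv_ne_zero hμ0], ?_⟩
  set t : ℂ := -μ⁻¹ with ht
  have ht0 : t ≠ 0 := by simp [ht, inv_ne_zero hμ0]
  rw [Fintype.linearIndependent_iff]
  intro c hc i
  -- apply g
  have h2 : (c : Fin k → ℂ) + t • e c = 0 := by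
    have := congrArg g hc
    simp only [map_sum, map_zero] at this
    have h3 : ∀ i, g (c i • (u i + t • d i)) = c i • (Pi.single i 1 : Fin k → ℂ) + (t * c i) • g (d i) := by
      intro i
      rw [map_smul, map_add, hg, map_smul, smul_add, smul_smul]
      ring_nf
    rw [Finset.sum_congr rfl (fun i _ => h3 i)] at this
    rw [Finset.sum_add_distrib] at this
    have h4 : ∑ i, c i • (Pi.single i 1 : Fin k → ℂ) = c := by
      funext j
      simp [Finset.sum_apply, Pi.single_apply]
    have h5 : ∑ i, (t * c i) • g (d i) = t • e c := by
      simp only [e, D, LinearMap.comp_apply, LinearMap.coe_mk, AddHom.coe_mk, map_sum, map_smul]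
      rw [Finset.smul_sum]
      congr 1; funext i; rw [smul_smul]
    rw [h4, h5] at this
    exact this
  by_contra hci
  have hcne : c ≠ 0 := fun h => hci (by simp [h])
  have hev : e c = μ • c := by
    have h6 : t • e c = -c := eq_neg_of_add_eq_zero_right h2
    have : e c = t⁻¹ • (-c) := by
      rw [← h6, smul_smul, inv_mul_cancel₀ ht0, one_smul]
    rw [this, ht]
    simp [smul_smul, inv_neg, inv_inv, hμ0]
  exact hμe (Module.End.hasEigenvalue_of_hasEigenvector
    ⟨Module.End.mem_eigenspace_iff.mpr hev, hcne⟩)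

lemma lemA [FiniteDimensional ℂ V] (L : Submodule ℂ (Module.End ℂ V)) (v : V)
    (hmax : ∀ u : V, finrank ℂ (LinearMap.range (evalL L u)) ≤
      finrank ℂ (LinearMap.range (evalL L v)))
    (A : ↥L) (hA : A.1 v = 0) (w : V) : A.1 w ∈ LinearMap.range (evalL L v) := by
  classical
  set W := LinearMap.range (evalL L v) with hWdef
  by_contra hnot
  let b : Basis (Fin (finrank ℂ W)) ℂ W := Module.finBasis ℂ W
  set r := finrank ℂ W with hr
  choose C hC using fun i : Fin r => (b i).2
  -- hC : ∀ i, evalL L v (C i) = (b i : V)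
  let u : Fin (r+1) → V := Fin.snoc (fun i => ((b i : V))) (A.1 w)
  let dd : Fin (r+1) → V := Fin.snoc (fun i => (C i).1 w) 0
  have hspan : Submodule.span ℂ (Set.range (fun i => ((b i : V)))) = W := by
    have h1 : (Set.range fun i => ((b i : V))) = W.subtype '' Set.range b := by
      rw [← Set.range_comp]; rfl
    rw [h1, Submodule.span_image, b.span_eq, Submodule.map_top, Submodule.range_subtype]
  have huind : LinearIndependent ℂ u := by
    rw [show u = Fin.snoc (fun i => ((b i : V))) (A.1 w) from rfl, linearIndependent_fin_snoc]
    refine ⟨b.linearIndependent.map' W.subtype W.ker_subtype, ?_⟩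
    rw [hspan]; exact hnot
  obtain ⟨t, ht0, hind⟩ := generic_indep u dd huind
  have hkey : ∀ j, u j + t • dd j ∈ LinearMap.range (evalL L (v + t • w)) := by
    intro j
    refine Fin.lastCases ?_ (fun i => ?_) j
    · refine ⟨t⁻¹ • A, ?_⟩
      show (↑(t⁻¹ • A) : Module.End ℂ V) (v + t • w) = u (Fin.last r) + t • dd (Fin.last r)
      simp only [u, dd, Fin.snoc_last, Submodule.coe_smul, LinearMap.smul_apply, map_add,
        hA, zero_add, map_smul, smul_zero, add_zero, smul_smul, mul_inv_cancel₀ ht0, one_smul]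
    · refine ⟨C i, ?_⟩
      show ((C i : Module.End ℂ V)) (v + t • w) = u i.castSucc + t • dd i.castSucc
      simp only [u, dd, Fin.snoc_castSucc, map_add, map_smul]
      congr 1
      exact hC i
  let u' : Fin (r+1) → ↥(LinearMap.range (evalL L (v + t • w))) :=
    fun j => ⟨u j + t • dd j, hkey j⟩
  have h1 : LinearIndependent ℂ u' := by
    apply LinearIndependent.of_comp (LinearMap.range (evalL L (v + t • w))).subtype
    exact hind
  have h2 := h1.fintype_card_le_finrank
  have h3 := hmax (v + t • w)
  simp only [Fintype.card_fin] at h2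
  omega

lemma finrank_submodule_prod {M N : Type*} [AddCommGroup M] [Module ℂ M]
    [AddCommGroup N] [Module ℂ N] (p : Submodule ℂ M) (q : Submodule ℂ N)
    [FiniteDimensional ℂ p] [FiniteDimensional ℂ q] :
    finrank ℂ (p.prod q) = finrank ℂ p + finrank ℂ q := by
  have e : ↥(p.prod q) ≃ₗ[ℂ] (↥p × ↥q) :=
    { toFun := fun x => (⟨x.1.1, x.2.1⟩, ⟨x.1.2, x.2.2⟩)
      invFun := fun y => ⟨(y.1.1, y.2.1), ⟨y.1.2, y.2.2⟩⟩
      map_add' := fun x y => rfl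
      map_smul' := fun c x => rfl
      left_inv := fun x => rfl
      right_inv := fun y => rfl }
  rw [e.finrank_eq, Module.finrank_prod]

lemma arith_aux (r1 q1 a b : ℕ) (ha : a * 2 ≤ (r1 + 1) * r1) (hb : b * 2 ≤ (q1 + 1) * q1) :
    ((r1 + 1) + ((a + b) + q1 * (r1 + 1))) * 2 ≤ (r1 + q1 + 2) * (r1 + q1 + 1) := by
  nlinarith [ha, hb]

set_option maxHeartbeats 1000000 in
set_option synthInstance.maxHeartbeats 200000 in
theorem nilp_space_finrank_le :
    ∀ (n : ℕ) (V : Type u_1) [AddCommGroup V] [Module ℂ V] [FiniteDimensional ℂ V],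
      finrank ℂ V ≤ n → ∀ (L : Submodule ℂ (Module.End ℂ V)),
      (∀ f ∈ L, IsNilpotent f) →
      finrank ℂ ↥L ≤ finrank ℂ V * (finrank ℂ V - 1) / 2 := by
  intro n
  induction n with
  | zero =>
    intro V _ _ _ hV L hL
    have h1 : finrank ℂ ↥L ≤ finrank ℂ (Module.End ℂ V) := Submodule.finrank_le L
    have h2 : finrank ℂ (Module.End ℂ V) = finrank ℂ V * finrank ℂ V :=
      finrank_linearMap ℂ ℂ V V
    have h0 : finrank ℂ V = 0 := Nat.le_zero.mp hV
    rw [h0] at h2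
    simp only [Nat.mul_zero, Nat.zero_mul] at h2
    omega
  | succ n IH =>
    intro V _ _ _ hV L hL
    classical
    obtain ⟨v, hv⟩ : ∃ v : V, ∀ u : V,
        finrank ℂ (LinearMap.range (evalL L u)) ≤ finrank ℂ (LinearMap.range (evalL L v)) := by
      set f : V → ℕ := fun u => finrank ℂ (LinearMap.range (evalL L u)) with hf
      have hbdd : BddAbove (Set.range f) := by
        refine ⟨finrank ℂ V, ?_⟩
        rintro x ⟨u, rfl⟩
        exact Submodule.finrank_le _
      obtain ⟨v, hv⟩ := Nat.sSup_mem (Set.range_nonempty f) hbdd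
      exact ⟨v, fun u => le_of_le_of_eq (le_csSup hbdd ⟨u, rfl⟩) hv.symm⟩
    obtain ⟨W, hWdef⟩ : ∃ W' : Submodule ℂ V, W' = LinearMap.range (evalL L v) := ⟨_, rfl⟩
    set r := finrank ℂ ↥W with hrdef
    set N := finrank ℂ V with hNdef
    have hvr : ∀ u : V, finrank ℂ (LinearMap.range (evalL L u)) ≤ r := by
      intro u
      rw [hrdef, hWdef]
      exact hv u
    by_cases hr0 : r = 0
    · have hLbot : L = ⊥ := by
        rw [Submodule.eq_bot_iff]
        intro A hA
        have hz : ∀ x : V, A x = 0 := by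
          intro x
          have h1 : (evalL L x) ⟨A, hA⟩ ∈ LinearMap.range (evalL L x) :=
            LinearMap.mem_range_self _ _
          have h2 : LinearMap.range (evalL L x) = ⊥ :=
            Submodule.finrank_eq_zero.mp (Nat.le_zero.mp (hr0 ▸ hvr x))
          rw [h2] at h1
          exact h1
        exact LinearMap.ext hz
      rw [hLbot]
      simp
    have hrpos : 1 ≤ r := Nat.one_le_iff_ne_zero.mpr hr0
    have hv0 : v ≠ 0 := by
      rintro rfl
      apply hr0
      have hW : W = ⊥ := by
        rw [hWdef, LinearMap.range_eq_bot]
        ext A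
        simp [evalL]
      rw [hrdef, hW]
      exact finrank_bot ℂ V
    have hvW : v ∉ W := by
      intro hmem
      rw [hWdef] at hmem
      obtain ⟨B, hB⟩ := hmem
      obtain ⟨m, hm⟩ := hL B.1 B.2
      have hfix : ∀ k : ℕ, (B.1 ^ k) v = v := by
        intro k
        induction k with
        | zero => rfl
        | succ k ih => rw [pow_succ', Module.End.mul_apply, ih]; exact hB
      have hfm := hfix m
      rw [hm] at hfm
      exact hv0 (by simpa using hfm.symm)
    have hWlt : W < ⊤ := lt_top_iff_ne_top.mpr (fun h => hvW (h ▸ Submodule.mem_top))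
    have hrltN : r < N := Submodule.finrank_lt hWlt.ne
    have hinv : ∀ (A : ↥L), A.1 v = 0 → ∀ x : V, A.1 x ∈ W := by
      intro A hA x
      rw [hWdef]
      exact lemA L v hv A hA x
    obtain ⟨K, hKdef⟩ : ∃ K' : Submodule ℂ ↥L, K' = LinearMap.ker (evalL L v) := ⟨_, rfl⟩
    letI iK1 : AddCommGroup ↥K := inferInstance
    letI iK2 : Module ℂ ↥K := inferInstance
    letI iK3 : FiniteDimensional ℂ ↥K := inferInstance
    have hdimL : finrank ℂ ↥L = r + finrank ℂ ↥K := by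
      have e1 : finrank ℂ ↥K = finrank ℂ ↥(LinearMap.ker (evalL L v)) :=
        congrArg (fun p : Submodule ℂ ↥L => finrank ℂ ↥p) hKdef
      have e2 : r = finrank ℂ ↥(LinearMap.range (evalL L v)) := by
        rw [hrdef]
        exact congrArg (fun p : Submodule ℂ V => finrank ℂ ↥p) hWdef
      have e3 := LinearMap.finrank_range_add_finrank_ker (evalL L v)
      omega
    obtain ⟨FK, hFKdef⟩ : ∃ F : ↥K →ₗ[ℂ] Module.End ℂ V, F = L.subtype.comp K.subtype :=
      ⟨_, rfl⟩
    have hFKapp : ∀ A : ↥K, FK A = A.1.1 := by rw [hFKdef]; intro A; rfl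
    have hFKmem : ∀ A : ↥K, FK A ∈ L := by
      intro A
      rw [hFKapp]
      exact A.1.2
    have hKle : K ≤ LinearMap.ker (evalL L v) := le_of_eq hKdef
    have hKv : ∀ A : ↥K, FK A v = 0 := by
      intro A
      rw [hFKapp]
      exact LinearMap.mem_ker.mp (hKle A.2)
    have hWWF : ∀ (A : ↥K), ∀ x ∈ W, FK A x ∈ W := by
      intro A x _
      have h4 : (⟨FK A, hFKmem A⟩ : ↥L).1 v = 0 := hKv A
      exact hinv ⟨FK A, hFKmem A⟩ h4 x
    obtain ⟨ρ, hρdef⟩ : ∃ p : ↥K →ₗ[ℂ] Module.End ℂ ↥W, p = restrictMap (M := ↥K) W FK hWWF :=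
      ⟨_, rfl⟩
    obtain ⟨π, hπdef⟩ : ∃ p : ↥K →ₗ[ℂ] Module.End ℂ (V ⧸ W), p = quotMap (M := ↥K) W FK hWWF :=
      ⟨_, rfl⟩
    obtain ⟨κ, hκdef⟩ :
        ∃ p : ↥K →ₗ[ℂ] (Module.End ℂ ↥W) × (Module.End ℂ (V ⧸ W)), p = ρ.prod π :=
      ⟨_, rfl⟩
    have hκapp : ∀ A : ↥K, κ A = (ρ A, π A) := by rw [hκdef]; intro A; rfl
    letI j1 : AddCommGroup ↥(LinearMap.ker κ) := inferInstance
    letI j2 : Module ℂ ↥(LinearMap.ker κ) := inferInstance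
    letI j3 : FiniteDimensional ℂ ↥(LinearMap.ker κ) := inferInstance
    letI j4 : AddCommGroup ↥(LinearMap.range κ) := inferInstance
    letI j5 : Module ℂ ↥(LinearMap.range κ) := inferInstance
    letI j6 : FiniteDimensional ℂ ↥(LinearMap.range κ) := inferInstance
    letI j7 : FiniteDimensional ℂ ↥(LinearMap.range ρ) := inferInstance
    letI j8 : FiniteDimensional ℂ ↥(LinearMap.range π) := inferInstance
    have hdimK : finrank ℂ ↥K =
        finrank ℂ ↥(LinearMap.range κ) + finrank ℂ ↥(LinearMap.ker κ) :=
      (LinearMap.finrank_range_add_finrank_ker κ).symm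
    have hle : LinearMap.range κ ≤ (LinearMap.range ρ).prod (LinearMap.range π) := by
      rintro x ⟨A, rfl⟩
      rw [hκapp]
      exact ⟨⟨A, rfl⟩, ⟨A, rfl⟩⟩
    have hrange : finrank ℂ ↥(LinearMap.range κ) ≤
        finrank ℂ ↥(LinearMap.range ρ) + finrank ℂ ↥(LinearMap.range π) := by
      calc finrank ℂ ↥(LinearMap.range κ)
          ≤ finrank ℂ ↥((LinearMap.range ρ).prod (LinearMap.range π)) :=
            Submodule.finrank_mono hle
        _ = _ := finrank_submodule_prod _ _
    have hnilρ : ∀ g ∈ LinearMap.range ρ, IsNilpotent g := by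
      rintro g ⟨A, rfl⟩
      obtain ⟨m, hm⟩ := hL (FK A) (hFKmem A)
      refine ⟨m, ?_⟩
      have hrw : ρ A = (FK A).restrict (hWWF A) := by rw [hρdef]; rfl
      rw [hrw, Module.End.pow_restrict]
      refine LinearMap.ext fun x => Subtype.ext ?_
      simp [LinearMap.restrict_coe_apply, hm]
    have hnilπ : ∀ g ∈ LinearMap.range π, IsNilpotent g := by
      rintro g ⟨A, rfl⟩
      obtain ⟨m, hm⟩ := hL (FK A) (hFKmem A)
      refine ⟨m, ?_⟩
      have hrw : π A = W.mapQ W (FK A) (hWWF A) := by rw [hπdef]; rfl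
      rw [hrw, ← Submodule.mapQ_pow]
      refine LinearMap.ext fun z => ?_
      obtain ⟨x, rfl⟩ := W.mkQ_surjective z
      simp [Submodule.mapQ_apply, hm]
    have hWn : finrank ℂ ↥W ≤ n := by omega
    have hIH1 := IH ↥W hWn (LinearMap.range ρ) hnilρ
    set q' := finrank ℂ (V ⧸ W) with hq'def
    have hq' : q' + r = N := Submodule.finrank_quotient_add_finrank W
    have hq'n : q' ≤ n := by omega
    have hIH2 := IH (V ⧸ W) hq'n (LinearMap.range π) hnilπ
    obtain ⟨W', hW'def⟩ : ∃ p : Submodule ℂ V, p = W ⊔ Submodule.span ℂ {v} := ⟨_, rfl⟩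
    have hinf : W ⊓ Submodule.span ℂ {v} = ⊥ := by
      rw [Submodule.eq_bot_iff]
      rintro x ⟨hxW, hxs⟩
      obtain ⟨c, rfl⟩ := Submodule.mem_span_singleton.mp hxs
      rcases eq_or_ne c 0 with rfl | hc
      · simp
      · exfalso
        apply hvW
        have h6 := W.smul_mem c⁻¹ hxW
        rwa [smul_smul, inv_mul_cancel₀ hc, one_smul] at h6
    have hW'rank : finrank ℂ ↥W' = r + 1 := by
      rw [hW'def]
      have h5 := Submodule.finrank_sup_add_finrank_inf_eq W (Submodule.span ℂ {v})
      rw [hinf, finrank_span_singleton hv0] at h5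
      simpa using h5
    obtain ⟨Fθ, hFθdef⟩ :
        ∃ F : ↥(LinearMap.ker κ) →ₗ[ℂ] Module.End ℂ V, F = FK.comp (LinearMap.ker κ).subtype :=
      ⟨_, rfl⟩
    have hFθapp : ∀ A : ↥(LinearMap.ker κ), Fθ A = FK A.1 := by rw [hFθdef]; intro A; rfl
    have hk1 : ∀ (A : ↥(LinearMap.ker κ)) (x : V), Fθ A x ∈ W := by
      intro A x
      have hA2 : κ A.1 = 0 := A.2
      rw [hκapp] at hA2
      have hπ0 : π A.1 = 0 := congrArg Prod.snd hA2
      rw [hπdef] at hπ0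
      have h7 := congrArg (fun g => g (Submodule.Quotient.mk x)) hπ0
      simp only [quotMap_apply, LinearMap.zero_apply] at h7
      rw [hFθapp]
      exact (Submodule.Quotient.mk_eq_zero W).mp h7
    have hk2 : ∀ (A : ↥(LinearMap.ker κ)), ∀ x ∈ W', Fθ A x = 0 := by
      intro A x hx
      have hA2 : κ A.1 = 0 := A.2
      rw [hκapp] at hA2
      have hρ0 : ρ A.1 = 0 := congrArg Prod.fst hA2
      rw [hρdef] at hρ0
      rw [hW'def] at hx
      obtain ⟨y, hy, z, hz, rfl⟩ := Submodule.mem_sup.mp hx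
      obtain ⟨c, rfl⟩ := Submodule.mem_span_singleton.mp hz
      have h8 : FK A.1 y = 0 := by
        have h9 := congrArg (fun g => ((g (⟨y, hy⟩ : ↥W) : ↥W) : V)) hρ0
        simpa [restrictMap_coe_apply] using h9
      have h10 : FK A.1 v = 0 := hKv A.1
      rw [hFθapp, map_add, map_smul, h8, h10]
      simp
    obtain ⟨θ, hθdef⟩ :
        ∃ T : ↥(LinearMap.ker κ) →ₗ[ℂ] ((V ⧸ W') →ₗ[ℂ] ↥W),
          T = liftRestrict (M := ↥(LinearMap.ker κ)) W W' Fθ hk1 hk2 := ⟨_, rfl⟩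
    have hθinj : Function.Injective θ := by
      rw [← LinearMap.ker_eq_bot, Submodule.eq_bot_iff]
      intro A hA
      rw [LinearMap.mem_ker, hθdef] at hA
      have hz : ∀ x : V, FK A.1 x = 0 := by
        intro x
        have h11 := congrArg (fun g => ((g (Submodule.Quotient.mk x) : ↥W) : V)) hA
        rw [← hFθapp A]
        simpa [liftRestrict_apply] using h11
      have hz2 : A.1.1.1 = (0 : Module.End ℂ V) := by
        refine LinearMap.ext fun x => ?_
        have := hz x
        rw [hFKapp] at this
        exact this
      exact Subtype.ext (Subtype.ext (Subtype.ext hz2))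
    have hker : finrank ℂ ↥(LinearMap.ker κ) ≤ finrank ℂ ((V ⧸ W') →ₗ[ℂ] ↥W) :=
      LinearMap.finrank_le_finrank_of_injective hθinj
    rw [finrank_linearMap] at hker
    set k' := finrank ℂ (V ⧸ W') with hk'def
    have hk'eq : k' + (r + 1) = N := by
      have h12 := Submodule.finrank_quotient_add_finrank W'
      rw [hW'rank] at h12
      exact h12
    set a := finrank ℂ ↥(LinearMap.range ρ) with hadef
    set b := finrank ℂ ↥(LinearMap.range π) with hbdef
    rw [Nat.le_div_iff_mul_le (by norm_num : 0 < 2)]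
    have ha2 : a * 2 ≤ r * (r - 1) :=
      (Nat.le_div_iff_mul_le (by norm_num : 0 < 2)).mp hIH1
    have hb2 : b * 2 ≤ q' * (q' - 1) :=
      (Nat.le_div_iff_mul_le (by norm_num : 0 < 2)).mp hIH2
    rw [← hrdef] at hker
    clear_value r N q' k' a b
    obtain ⟨r1, hrr⟩ : ∃ r1, r = r1 + 1 := ⟨r - 1, by omega⟩
    obtain ⟨q1, hqq⟩ : ∃ q1, q' = q1 + 1 := ⟨q' - 1, by omega⟩
    have ha3 : a * 2 ≤ (r1 + 1) * r1 := by rw [hrr] at ha2; simpa using ha2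
    have hb3 : b * 2 ≤ (q1 + 1) * q1 := by rw [hqq] at hb2; simpa using hb2
    have hNN : N = r1 + q1 + 2 := by omega
    have hN1 : N - 1 = r1 + q1 + 1 := by omega
    have hkk : k' = q1 := by omega
    have final : (r + ((a + b) + k' * r)) * 2 ≤ N * (N - 1) := by
      rw [hN1, hNN, hkk, hrr]
      exact arith_aux r1 q1 a b ha3 hb3
    calc finrank ℂ ↥L * 2 = (r + finrank ℂ ↥K) * 2 := by rw [hdimL]
      _ = (r + (finrank ℂ ↥(LinearMap.range κ) + finrank ℂ ↥(LinearMap.ker κ))) * 2 := by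
          rw [hdimK]
      _ ≤ (r + ((a + b) + k' * r)) * 2 := by
          have h13 : finrank ℂ ↥(LinearMap.range κ) + finrank ℂ ↥(LinearMap.ker κ) ≤
              (a + b) + k' * r := by
            have h14 := Nat.add_le_add hrange hker
            omega
          exact Nat.mul_le_mul_right 2 (Nat.add_le_add_left h13 r)
      _ ≤ N * (N - 1) := final

/-- Gerstenhaber's theorem: for `n ≥ 2`, a linear subspace of the `n × n` complex
matrices consisting entirely of nilpotent matrices has dimension at most `n(n-1)/2`. -/
theorem stmt_3 (n : ℕ) (hn : 2 ≤ n)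
    (L : Submodule ℂ (Matrix (Fin n) (Fin n) ℂ))
    (hL : ∀ A ∈ L, IsNilpotent A) :
    Module.finrank ℂ L ≤ n * (n - 1) / 2 := by
  classical
  let e : Matrix (Fin n) (Fin n) ℂ ≃ₐ[ℂ] Module.End ℂ (Fin n → ℂ) := Matrix.toLinAlgEquiv'
  set L' : Submodule ℂ (Module.End ℂ (Fin n → ℂ)) :=
    L.map (e.toLinearEquiv : Matrix (Fin n) (Fin n) ℂ →ₗ[ℂ] Module.End ℂ (Fin n → ℂ)) with hL'def
  have hL' : ∀ f ∈ L', IsNilpotent f := by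
    rintro f ⟨A, hA, rfl⟩
    exact IsNilpotent.map (hL A hA) e
  have h2 : finrank ℂ (Fin n → ℂ) = n := Module.finrank_fin_fun ℂ
  have h1 := nilp_space_finrank_le n (Fin n → ℂ) (le_of_eq h2) L' hL'
  rw [h2] at h1
  have h3 : finrank ℂ ↥L = finrank ℂ ↥L' :=
    LinearEquiv.finrank_eq
      (Submodule.equivMapOfInjective _ e.toLinearEquiv.injective L)
  rw [h3]
  exact h1
end
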